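/- Let $h>0$, $\alpha\in(0,2)$, and let $(M_j)_{j\in\mathbb{Z}}$ be positive with $M_j\sim \langle hj\rangle^{-1-\alpha}$ (two-sided bounds with constants independent of $h$). Suppose $\|(D_h^+\sqrt M)_j^2/M_j\|_{\ell^\infty}\le A$ uniformly in $h$. Let $\beta_k^h$ satisfy $b|hk|^{-1-\alpha}\le\beta_k^h\le B|hk|^{-1-\alpha}$ for $k\neq0$ and define $\mathcal S(f,f)=\frac12\sum_{j}\sum_{k\neq0}\beta_k^h(f_j/M_j-f_{j+k}/M_{j+k})^2M_jh^2$. Then there is $C>0$ independent of $h$ such that $\mathcal S(f,f)\ge c\,|fM^{-1/2}|_{\dot H^{\alpha/2}_h}^2 - C\,\|fM^{-1/2}\|_{\ell^2_h}^2$ for some $c>0$ independent of $h$. -/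

import Mathlib

open Real

/-- Japanese bracket `⟨x⟩ = (1+x²)^{1/2}`. -/
noncomputable def jbr (x : ℝ) : ℝ := Real.sqrt (1 + x ^ 2)

/-- Forward finite difference. -/
noncomputable def Dhp (h : ℝ) (u : ℤ → ℝ) : ℤ → ℝ := fun j => (u (j + 1) - u j) / h

/-- Squared discrete `ℓ²_h` norm. -/
noncomputable def l2hSq (h : ℝ) (f : ℤ → ℝ) : ℝ := ∑' j : ℤ, (f j) ^ 2 * h

/-- Squared discrete fractional Sobolev seminorm `|g|_{Ḣ^s_h}²`. -/
noncomputable def hSemiSq (h s : ℝ) (g : ℤ → ℝ) : ℝ :=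
  ∑' p : ℤ × ℤ,
    if p.2 = 0 then 0
    else (g p.1 - g (p.1 + p.2)) ^ 2 / |h * (p.2 : ℝ)| ^ (1 + 2 * s) * h ^ 2

/-- The Dirichlet form `𝒮(f,f) = ½ ∑_{j,k≠0} β_k (f_j/M_j - f_{j+k}/M_{j+k})² M_j h²`. -/
noncomputable def symFormDiag (h : ℝ) (β : ℤ → ℝ) (M : ℤ → ℝ) (f : ℤ → ℝ) : ℝ :=
  (1 / 2) * ∑' p : ℤ × ℤ,
    if p.2 = 0 then 0
    else β p.2 * (f p.1 / M p.1 - f (p.1 + p.2) / M (p.1 + p.2)) ^ 2 * M p.1 * h ^ 2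

/-! Write `g = f M^{-1/2}` and `s = √M`, so that the `(j, k)` summand of `𝒮` is
`β_k (g_j - g_{j+k} s_j / s_{j+k})²`. Near the diagonal (`|hk| ≤ 1`), telescoping the bound on
`D_h^+ √M` along `[j, j + k]`, where `M` is comparable to `M_{j+k}`, gives
`|s_{j+k} - s_j| ≲ |hk| s_{j+k}`; then `(a + e)² ≥ a²/2 - e²` with `a = g_j - g_{j+k}` recovers the
`Ḣ^{α/2}_h` summand up to an error `≲ g_{j+k}² |hk|^{1-α}`. Far from the diagonal the `Ḣ^{α/2}_h`
summand is at most `2 (g_j² + g_{j+k}²) |hk|^{-1-α}`. Both errors are `(g_j² + g_{j+k}²) h w(|hk|)`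
for a profile `w` whose Riemann sums `∑_k h w(|hk|)` are bounded uniformly in `h` (by telescoping
against explicit primitives), and summing over `j` produces the `ℓ²_h` term.
-/

lemma mul_sub_mul_rpow_sub_one_le_rpow_sub_rpow {t x y : ℝ} (ht0 : 0 ≤ t) (ht1 : t ≤ 1)
    (hx : 0 ≤ x) (hy : 0 < y) :
    t * (y - x) * y ^ (t - 1) ≤ y ^ t - x ^ t := by
  have hbern : (x / y) ^ t ≤ 1 + t * (x / y - 1) := by
    simpa using rpow_one_add_le_one_add_mul_self (s := x / y - 1)
      (by linarith [div_nonneg hx hy.le]) ht0 ht1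
  have hxt : x ^ t = (x / y) ^ t * y ^ t := by
    rw [div_rpow hx hy.le, div_mul_cancel₀ _ (rpow_pos_of_pos hy t).ne']
  have hyt : y ^ (t - 1) = y ^ t / y := by rw [rpow_sub_one hy.ne']
  rw [hxt, hyt]
  calc t * (y - x) * (y ^ t / y) = y ^ t - (1 + t * (x / y - 1)) * y ^ t := by
        field_simp; ring
    _ ≤ y ^ t - (x / y) ^ t * y ^ t := by
        gcongr

lemma mul_sub_mul_rpow_neg_le_rpow_neg_sub_rpow_neg {a x y : ℝ} (ha : 0 ≤ a) (hx : 0 < x)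
    (hxy : x ≤ y) :
    a * (y - x) * y ^ (-(1 + a)) ≤ x ^ (-a) - y ^ (-a) := by
  have hy : 0 < y := hx.trans_le hxy
  have hr : 0 < x / y := div_pos hx hy
  have htangent : 1 - a * (x / y - 1) ≤ (x / y) ^ (-a) := by
    rw [rpow_def_of_pos hr]
    have := add_one_le_exp (Real.log (x / y) * -a)
    nlinarith [log_le_sub_one_of_pos hr]
  have hxa : x ^ (-a) = (x / y) ^ (-a) * y ^ (-a) := by
    rw [div_rpow hx.le hy.le, div_mul_cancel₀ _ (rpow_pos_of_pos hy _).ne']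
  have hya : y ^ (-(1 + a)) = y ^ (-a) / y := by
    rw [show -(1 + a) = -a - 1 by ring, rpow_sub_one hy.ne']
  rw [hxa, hya]
  calc a * (y - x) * (y ^ (-a) / y) = (1 - a * (x / y - 1)) * y ^ (-a) - y ^ (-a) := by
        field_simp; ring
    _ ≤ (x / y) ^ (-a) * y ^ (-a) - y ^ (-a) := by
        gcongr

lemma summable_and_tsum_le_of_le_sub {d a : ℕ → ℝ} {c : ℝ} (hd : ∀ n, 0 ≤ d n)
    (hda : ∀ n, d n ≤ a (n + 1) - a n) (ha : ∀ n, a n ≤ c) :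
    Summable d ∧ ∑' n, d n ≤ c - a 0 := by
  have hpartial : ∀ n, ∑ i ∈ Finset.range n, d i ≤ c - a 0 := fun n =>
    calc ∑ i ∈ Finset.range n, d i ≤ ∑ i ∈ Finset.range n, (a (i + 1) - a i) :=
          Finset.sum_le_sum fun i _ => hda i
      _ = a n - a 0 := Finset.sum_range_sub a n
      _ ≤ c - a 0 := by linarith [ha n]
  exact ⟨summable_of_sum_range_le hd hpartial, Real.tsum_le_of_sum_range_le hd hpartial⟩

lemma mul_rpow_one_sub_le_of_add_le_one {α x h : ℝ} (hα0 : 0 ≤ α) (hα2 : α < 2) (hx : 0 ≤ x)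
    (hh : 0 < h) (hxh : x + h ≤ 1) :
    h * (x + h) ^ (1 - α) ≤ 2 / (2 - α) * ((x + h) ^ (1 - α / 2) - x ^ (1 - α / 2)) := by
  have hy : 0 < x + h := by linarith
  have htangent := mul_sub_mul_rpow_sub_one_le_rpow_sub_rpow (t := 1 - α / 2)
    (by linarith) (by linarith) hx hy
  have hexp : (x + h) ^ (1 - α) ≤ (x + h) ^ (1 - α / 2 - 1) :=
    rpow_le_rpow_of_exponent_ge hy hxh (by linarith)
  rw [add_sub_cancel_left] at htangent
  calc h * (x + h) ^ (1 - α) ≤ h * (x + h) ^ (1 - α / 2 - 1) := by gcongr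
    _ = 2 / (2 - α) * ((1 - α / 2) * h * (x + h) ^ (1 - α / 2 - 1)) := by
        field_simp [show 2 - α ≠ 0 by linarith]
    _ ≤ _ := by gcongr

lemma mul_rpow_neg_le_of_one_lt_add {α x h : ℝ} (hα : 0 < α) (hx : 0 ≤ x) (hh : 0 < h)
    (hxh : 1 < x + h) :
    h * (x + h) ^ (-(1 + α)) ≤
      2 ^ (1 + α) / α * ((x + 1) ^ (-α) - (x + h + 1) ^ (-α)) := by
  have htangent := mul_sub_mul_rpow_neg_le_rpow_neg_sub_rpow_neg hα.le
    (show 0 < x + 1 by linarith) (show x + 1 ≤ x + h + 1 by linarith)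
  rw [show x + h + 1 - (x + 1) = h by ring] at htangent
  have hhalf : (x + h) ^ (-(1 + α)) ≤ 2 ^ (1 + α) * (x + h + 1) ^ (-(1 + α)) :=
    calc (x + h) ^ (-(1 + α)) ≤ ((x + h + 1) / 2) ^ (-(1 + α)) :=
          rpow_le_rpow_of_nonpos (by positivity) (by linarith) (by linarith)
      _ = 2 ^ (1 + α) * (x + h + 1) ^ (-(1 + α)) := by
          rw [div_rpow (by positivity) zero_le_two, rpow_neg zero_le_two, div_inv_eq_mul,
            mul_comm]
  calc h * (x + h) ^ (-(1 + α)) ≤ h * (2 ^ (1 + α) * (x + h + 1) ^ (-(1 + α))) := by gcongr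
    _ = 2 ^ (1 + α) / α * (α * h * (x + h + 1) ^ (-(1 + α))) := by field_simp
    _ ≤ _ := by gcongr

noncomputable def kernelProfile (α w : ℝ) : ℝ := if w ≤ 1 then w ^ (1 - α) else w ^ (-(1 + α))

lemma kernelProfile_nonneg (α : ℝ) {w : ℝ} (hw : 0 ≤ w) : 0 ≤ kernelProfile α w := by
  unfold kernelProfile; split_ifs <;> positivity

lemma summable_and_tsum_kernelProfile_le {α h : ℝ} (hα0 : 0 < α) (hα2 : α < 2) (hh : 0 < h) :
    Summable (fun n : ℕ => h * kernelProfile α (h * (n + 1))) ∧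
      ∑' n : ℕ, h * kernelProfile α (h * (n + 1)) ≤ 2 / (2 - α) + 2 ^ (1 + α) / α := by
  set t := 1 - α / 2
  -- Potentials whose increments dominate the two regimes of the profile; `far` is shifted by `1`
  -- to stay regular at `0`, at the price of the factor `2 ^ (1 + α)`.
  set near : ℕ → ℝ := fun n => 2 / (2 - α) * min ((h * n) ^ t) 1
  set far : ℕ → ℝ := fun n => 2 ^ (1 + α) / α * (1 - (h * n + 1) ^ (-α))
  have ht : 0 ≤ t := by simp only [t]; linarith
  have hnear_coef : 0 ≤ 2 / (2 - α) := div_nonneg zero_le_two (by linarith)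
  have hfar_coef : 0 ≤ 2 ^ (1 + α) / α := by positivity
  have hnear_mono : ∀ n, near n ≤ near (n + 1) := fun n => by
    have : h * n ≤ h * (n + 1 : ℕ) := by gcongr; omega
    simp only [near]
    gcongr
  have hfar_mono : ∀ n, far n ≤ far (n + 1) := fun n => by
    have : h * n ≤ h * (n + 1 : ℕ) := by gcongr; omega
    have hle : (h * ((n + 1 : ℕ) : ℝ) + 1) ^ (-α) ≤ (h * n + 1) ^ (-α) :=
      rpow_le_rpow_of_nonpos (by positivity) (by linarith) (by linarith)
    exact mul_le_mul_of_nonneg_left (by linarith) hfar_coef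
  have hstep : ∀ n : ℕ, h * kernelProfile α (h * (n + 1)) ≤
      (near (n + 1) + far (n + 1)) - (near n + far n) := fun n => by
    have hx : (0 : ℝ) ≤ h * n := by positivity
    have hy : h * ((n : ℝ) + 1) = h * n + h := by ring
    unfold kernelProfile
    split_ifs with hw
    · have hxt : (h * n) ^ t ≤ 1 := rpow_le_one hx (by nlinarith) (by simp only [t]; linarith)
      have hyt : (h * ((n + 1 : ℕ) : ℝ)) ^ t ≤ 1 :=
        rpow_le_one (by positivity) (by push_cast; linarith) (by simp only [t]; linarith)
      have := mul_rpow_one_sub_le_of_add_le_one hα0.le hα2 hx hh (hy ▸ hw)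
      simp only [near, min_eq_left hxt, min_eq_left hyt]
      push_cast
      rw [hy]
      linarith [hfar_mono n]
    · have := mul_rpow_neg_le_of_one_lt_add hα0 hx hh (by rw [← hy]; linarith)
      simp only [far]
      push_cast
      rw [hy]
      linarith [hnear_mono n]
  have hbound : ∀ n, near n + far n ≤ 2 / (2 - α) + 2 ^ (1 + α) / α := fun n => by
    have : 0 ≤ (h * n + 1) ^ (-α) := by positivity
    have h1 := mul_le_mul_of_nonneg_left (min_le_right ((h * n) ^ t) 1) hnear_coef
    have h2 := mul_le_mul_of_nonneg_left (show 1 - (h * n + 1) ^ (-α) ≤ 1 by linarith) hfar_coef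
    simp only [near, far]
    linarith
  have hzero : near 0 + far 0 = 0 := by
    simp [near, far, t, zero_rpow (show 1 - α / 2 ≠ 0 by linarith)]
  simpa [hzero] using summable_and_tsum_le_of_le_sub
    (fun n => mul_nonneg hh.le (kernelProfile_nonneg α (by positivity))) hstep hbound

noncomputable def profileWeight (α h : ℝ) (k : ℤ) : ℝ :=
  if k = 0 then 0 else h * kernelProfile α |h * k|

lemma profileWeight_nonneg (α : ℝ) {h : ℝ} (hh : 0 ≤ h) (k : ℤ) : 0 ≤ profileWeight α h k := by
  unfold profileWeight
  split_ifs
  · exact le_rfl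
  · exact mul_nonneg hh (kernelProfile_nonneg α (abs_nonneg _))

lemma summable_and_tsum_profileWeight_le {α h : ℝ} (hα0 : 0 < α) (hα2 : α < 2) (hh : 0 < h) :
    Summable (profileWeight α h) ∧
      ∑' k, profileWeight α h k ≤ 2 * (2 / (2 - α) + 2 ^ (1 + α) / α) := by
  obtain ⟨hsum, hle⟩ := summable_and_tsum_kernelProfile_le hα0 hα2 hh
  have hpos : (fun n : ℕ => profileWeight α h (n + 1)) =
      fun n : ℕ => h * kernelProfile α (h * (n + 1)) := by
    funext n
    rw [profileWeight, if_neg (by omega), abs_of_pos (by positivity)]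
    push_cast; rfl
  have hneg : (fun n : ℕ => profileWeight α h (-(n + 1))) =
      fun n : ℕ => h * kernelProfile α (h * (n + 1)) := by
    funext n
    rw [profileWeight, if_neg (by omega), abs_of_neg (by push_cast; nlinarith)]
    push_cast; ring_nf
  have hasSum := HasSum.of_add_one_of_neg_add_one (by rw [hpos]; exact hsum.hasSum)
    (by rw [hneg]; exact hsum.hasSum)
  rw [profileWeight, if_pos rfl, add_zero] at hasSum
  exact ⟨hasSum.summable, by rw [hasSum.tsum_eq]; linarith⟩

lemma hasSum_add_shift_mul {G : Type*} [AddGroup G] {u τ : G → ℝ} (hu0 : ∀ j, 0 ≤ u j)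
    (hτ0 : ∀ k, 0 ≤ τ k) (hu : Summable u) (hτ : Summable τ) :
    HasSum (fun p : G × G => (u p.1 + u (p.1 + p.2)) * τ p.2)
      (2 * (∑' j, u j) * ∑' k, τ k) := by
  have hprod : HasSum (fun p : G × G => u p.1 * τ p.2) ((∑' j, u j) * ∑' k, τ k) :=
    hu.hasSum.mul hτ.hasSum (hu.mul_of_nonneg hτ hu0 hτ0)
  let shear : G × G ≃ G × G :=
    { toFun := fun p => (p.1 + p.2, p.2)
      invFun := fun p => (p.1 - p.2, p.2)
      left_inv := fun p => by simp
      right_inv := fun p => by simp }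
  have hshear : HasSum (fun p : G × G => u (p.1 + p.2) * τ p.2) ((∑' j, u j) * ∑' k, τ k) :=
    (shear.hasSum_iff (f := fun p : G × G => u p.1 * τ p.2)).2 hprod
  convert hprod.add hshear using 1
  · funext p; ring
  · ring

lemma jbr_add_le_two_mul (x : ℝ) {y : ℝ} (hy : |y| ≤ 1) : jbr (x + y) ≤ 2 * jbr x := by
  have hy2 : y ^ 2 ≤ 1 := by nlinarith [sq_abs y, abs_nonneg y]
  rw [jbr, jbr, show (2 : ℝ) = √(2 ^ 2) by simp, ← sqrt_mul (by positivity)]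
  exact sqrt_le_sqrt (by nlinarith [sq_nonneg (x - y)])

lemma le_mul_of_comparable_jbr_rpow {h p cM : ℝ} {M : ℤ → ℝ} (hp : 0 ≤ p) (hcM : 0 < cM)
    (hM : ∀ j : ℤ, cM⁻¹ * jbr (h * j) ^ (-p) ≤ M j ∧ M j ≤ cM * jbr (h * j) ^ (-p))
    {i l : ℤ} (hil : |h * i - h * l| ≤ 1) :
    M i ≤ cM ^ 2 * 2 ^ p * M l := by
  have hjbr : jbr (h * l) / 2 ≤ jbr (h * i) := by
    have := jbr_add_le_two_mul (h * i) (y := h * l - h * i) (by rwa [abs_sub_comm])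
    rw [add_sub_cancel] at this
    linarith
  have hdecay : jbr (h * i) ^ (-p) ≤ 2 ^ p * jbr (h * l) ^ (-p) :=
    calc jbr (h * i) ^ (-p) ≤ (jbr (h * l) / 2) ^ (-p) :=
          rpow_le_rpow_of_nonpos (by rw [jbr]; positivity) hjbr (by linarith)
      _ = 2 ^ p * jbr (h * l) ^ (-p) := by
          rw [div_rpow (by rw [jbr]; positivity) zero_le_two, rpow_neg zero_le_two,
            div_inv_eq_mul, mul_comm]
  have hlower : jbr (h * l) ^ (-p) ≤ cM * M l := by
    have := (hM l).1
    rwa [inv_mul_le_iff₀ hcM] at this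
  calc M i ≤ cM * jbr (h * i) ^ (-p) := (hM i).2
    _ ≤ cM * (2 ^ p * (cM * M l)) := by gcongr; exact hdecay.trans (by gcongr)
    _ = cM ^ 2 * 2 ^ p * M l := by ring

lemma abs_sub_le_mul_of_abs_succ_sub_le {u : ℤ → ℝ} {c : ℝ} {m n : ℤ} (hmn : m ≤ n)
    (hu : ∀ i, m ≤ i → i < n → |u (i + 1) - u i| ≤ c) :
    |u n - u m| ≤ ((n : ℝ) - m) * c := by
  induction n, hmn using Int.leInduction with
  | base => simp
  | succ n hmn ih =>
    have hstep := hu n hmn (by omega)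
    have hprev := ih fun i hi hin => hu i hi (by omega)
    calc |u (n + 1) - u m| ≤ |u (n + 1) - u n| + |u n - u m| := abs_sub_le _ _ _
      _ ≤ c + ((n : ℝ) - m) * c := add_le_add hstep hprev
      _ = (((n + 1 : ℤ) : ℝ) - m) * c := by push_cast; ring

lemma abs_sub_le_abs_mul_of_abs_succ_sub_le {u : ℤ → ℝ} {c : ℝ} (m n : ℤ)
    (hu : ∀ i, min m n ≤ i → i < max m n → |u (i + 1) - u i| ≤ c) :
    |u n - u m| ≤ |(n : ℝ) - m| * c := by
  rcases le_total m n with hmn | hnm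
  · rw [abs_of_nonneg (a := (n : ℝ) - m) (by simpa using hmn)]
    exact abs_sub_le_mul_of_abs_succ_sub_le hmn fun i hi hin =>
      hu i (by simpa [hmn] using hi) (by simpa [hmn] using hin)
  · rw [abs_sub_comm, abs_sub_comm (n : ℝ), abs_of_nonneg (a := (m : ℝ) - n) (by simpa using hnm)]
    exact abs_sub_le_mul_of_abs_succ_sub_le hnm fun i hi hin =>
      hu i (by simpa [hnm] using hi) (by simpa [hnm] using hin)

lemma sqrt_sub_sqrt_sq_le {h p cM A : ℝ} {M : ℤ → ℝ} (hh : 0 < h) (hp : 0 ≤ p) (hcM : 0 < cM)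
    (hA : 0 ≤ A) (hMpos : ∀ j, 0 < M j)
    (hM : ∀ j : ℤ, cM⁻¹ * jbr (h * j) ^ (-p) ≤ M j ∧ M j ≤ cM * jbr (h * j) ^ (-p))
    (hD : ∀ j : ℤ, (Dhp h (fun i => √(M i)) j) ^ 2 / M j ≤ A)
    (j k : ℤ) (hk : |h * k| ≤ 1) :
    (√(M (j + k)) - √(M j)) ^ 2 ≤ A * cM ^ 2 * 2 ^ p * (h * k) ^ 2 * M (j + k) := by
  set K := A * cM ^ 2 * 2 ^ p
  have hK : 0 ≤ K := by positivity
  have hincrement : ∀ i, min j (j + k) ≤ i → i < max j (j + k) →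
      |√(M (i + 1)) - √(M i)| ≤ h * √(K * M (j + k)) := fun i hi hin => by
    have hnear : |h * i - h * ((j + k : ℤ) : ℝ)| ≤ 1 := by
      have hik : |(i : ℝ) - ((j + k : ℤ) : ℝ)| ≤ |(k : ℝ)| := by
        rw [← Int.cast_sub, ← Int.cast_abs, ← Int.cast_abs, Int.cast_le]
        rw [abs_le]; constructor <;> cases abs_cases k <;> omega
      calc |h * i - h * ((j + k : ℤ) : ℝ)| = h * |(i : ℝ) - ((j + k : ℤ) : ℝ)| := by
            rw [← mul_sub, abs_mul, abs_of_pos hh]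
        _ ≤ h * |(k : ℝ)| := by gcongr
        _ ≤ 1 := by rwa [abs_mul, abs_of_pos hh] at hk
    have hDi : (Dhp h (fun i => √(M i)) i) ^ 2 ≤ K * M (j + k) :=
      calc (Dhp h (fun i => √(M i)) i) ^ 2 ≤ A * M i := by
            have := hD i; rw [div_le_iff₀ (hMpos i)] at this; linarith
        _ ≤ A * (cM ^ 2 * 2 ^ p * M (j + k)) := by
            gcongr; exact le_mul_of_comparable_jbr_rpow hp hcM hM hnear
        _ = K * M (j + k) := by ring
    have hdiff : √(M (i + 1)) - √(M i) = h * Dhp h (fun i => √(M i)) i := by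
      rw [Dhp]; field_simp
    rw [hdiff, abs_mul, abs_of_pos hh, ← sqrt_sq_eq_abs]
    gcongr
  have htele := abs_sub_le_abs_mul_of_abs_succ_sub_le (u := fun i => √(M i)) j (j + k)
    hincrement
  push_cast at htele
  rw [add_sub_cancel_left] at htele
  calc (√(M (j + k)) - √(M j)) ^ 2 = |√(M (j + k)) - √(M j)| ^ 2 := (sq_abs _).symm
    _ ≤ (|(k : ℝ)| * (h * √(K * M (j + k)))) ^ 2 := by gcongr
    _ = K * (h * k) ^ 2 * M (j + k) := by
        rw [mul_pow, mul_pow, sq_sqrt (mul_nonneg hK (hMpos _).le), sq_abs]; ring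

lemma half_mul_sq_sub_mul_rpow_le {α b B K β w gj gk sj sk : ℝ} (hb : 0 ≤ b) (hB : 0 ≤ B)
    (hK : 0 ≤ K) (hw : 0 < w) (hsk : 0 < sk)
    (hβb : b * w ^ (-(1 + α)) ≤ β) (hβB : β ≤ B * w ^ (-(1 + α)))
    (hs : w ≤ 1 → (sk - sj) ^ 2 ≤ K * w ^ 2 * sk ^ 2) :
    b / 2 * (gj - gk) ^ 2 * w ^ (-(1 + α)) ≤
      β * (gj - gk * sj / sk) ^ 2 + (B * K + b) * (gj ^ 2 + gk ^ 2) * kernelProfile α w := by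
  set W := w ^ (-(1 + α))
  have hW : 0 < W := rpow_pos_of_pos hw _
  have hβ : 0 ≤ β := le_trans (by positivity) hβb
  unfold kernelProfile
  split_ifs with hw1
  · -- `e` is the error made by replacing `sj / sk` with `1`
    set a := gj - gk
    set e := gk * (sk - sj) / sk
    have hae : gj - gk * sj / sk = a + e := by simp only [a, e]; field_simp; ring
    have he : e ^ 2 ≤ K * w ^ 2 * gk ^ 2 := by
      have : e ^ 2 = gk ^ 2 * ((sk - sj) ^ 2 / sk ^ 2) := by simp only [e]; ring
      rw [this, mul_comm _ (gk ^ 2)]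
      gcongr
      rw [div_le_iff₀ (by positivity)]
      exact hs hw1
    have hsq : a ^ 2 / 2 - e ^ 2 ≤ (a + e) ^ 2 := by nlinarith [sq_nonneg (a + 2 * e)]
    have hWw : W * w ^ 2 = w ^ (1 - α) := by
      rw [← rpow_two, ← rpow_add hw]; ring_nf
    rw [hae]
    calc b / 2 * a ^ 2 * W = b * W * (a ^ 2 / 2) := by ring
      _ ≤ β * (a ^ 2 / 2) := by gcongr
      _ ≤ β * (a + e) ^ 2 + β * e ^ 2 := by nlinarith
      _ ≤ β * (a + e) ^ 2 + B * W * (K * w ^ 2 * gk ^ 2) := by gcongr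
      _ = β * (a + e) ^ 2 + B * K * gk ^ 2 * (W * w ^ 2) := by ring
      _ ≤ β * (a + e) ^ 2 + (B * K + b) * (gj ^ 2 + gk ^ 2) * w ^ (1 - α) := by
          rw [hWw]; gcongr <;> nlinarith [sq_nonneg gj]
  · calc b / 2 * (gj - gk) ^ 2 * W ≤ b / 2 * (2 * (gj ^ 2 + gk ^ 2)) * W := by
          gcongr; nlinarith [sq_nonneg (gj + gk)]
      _ ≤ β * (gj - gk * sj / sk) ^ 2 + (B * K + b) * (gj ^ 2 + gk ^ 2) * W := by
          have : 0 ≤ β * (gj - gk * sj / sk) ^ 2 := by positivity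
          have : 0 ≤ B * K * (gj ^ 2 + gk ^ 2) * W := by positivity
          nlinarith

lemma hSemiSq_summand_le {α h cM A b B : ℝ} {M β f : ℤ → ℝ} (hh : 0 < h) (hα : 0 ≤ 1 + α)
    (hcM : 0 < cM) (hA : 0 ≤ A) (hb : 0 ≤ b) (hB : 0 ≤ B) (hMpos : ∀ j, 0 < M j)
    (hM : ∀ j : ℤ, cM⁻¹ * jbr (h * j) ^ (-(1 + α)) ≤ M j ∧
      M j ≤ cM * jbr (h * j) ^ (-(1 + α)))
    (hD : ∀ j : ℤ, (Dhp h (fun i => √(M i)) j) ^ 2 / M j ≤ A)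
    (hβ : ∀ k : ℤ, k ≠ 0 → b * |h * (k : ℝ)| ^ (-(1 + α)) ≤ β k ∧
      β k ≤ B * |h * (k : ℝ)| ^ (-(1 + α)))
    (j k : ℤ) :
    b / 4 * (if k = 0 then 0
      else (f j / √(M j) - f (j + k) / √(M (j + k))) ^ 2 / |h * (k : ℝ)| ^ (1 + 2 * (α / 2)) *
        h ^ 2) ≤
    1 / 2 * (if k = 0 then 0
      else β k * (f j / M j - f (j + k) / M (j + k)) ^ 2 * M j * h ^ 2) +
    ((f j / √(M j)) ^ 2 * h + (f (j + k) / √(M (j + k))) ^ 2 * h) *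
      ((B * (A * cM ^ 2 * 2 ^ (1 + α)) + b) / 2 * profileWeight α h k) := by
  by_cases hk : k = 0
  · simp [hk, profileWeight]
  have hw : 0 < |h * (k : ℝ)| := abs_pos.2 (mul_ne_zero hh.ne' (Int.cast_ne_zero.2 hk))
  have hsj := sqrt_pos.2 (hMpos j)
  have hsk := sqrt_pos.2 (hMpos (j + k))
  have hpair := half_mul_sq_sub_mul_rpow_le (gj := f j / √(M j)) (gk := f (j + k) / √(M (j + k)))
    (sj := √(M j)) (K := A * cM ^ 2 * 2 ^ (1 + α))
    hb hB (by positivity) hw hsk (hβ k hk).1 (hβ k hk).2 fun hw1 => by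
      rw [sq_abs, sq_sqrt (hMpos (j + k)).le]
      exact sqrt_sub_sqrt_sq_le hh hα hcM hA hMpos hM hD j k hw1
  have hform : (f j / M j - f (j + k) / M (j + k)) ^ 2 * M j =
      (f j / √(M j) - f (j + k) / √(M (j + k)) * √(M j) / √(M (j + k))) ^ 2 := by
    have key : ∀ s t : ℝ, 0 < s → 0 < t →
        (f j / s ^ 2 - f (j + k) / t ^ 2) ^ 2 * s ^ 2 = (f j / s - f (j + k) / t * s / t) ^ 2 :=
      fun s t hs ht => by field_simp
    have := key _ _ hsj hsk
    rwa [sq_sqrt (hMpos j).le, sq_sqrt (hMpos (j + k)).le] at this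
  have hdiv : ∀ x : ℝ, x / |h * (k : ℝ)| ^ (1 + 2 * (α / 2)) = x * |h * (k : ℝ)| ^ (-(1 + α)) :=
    fun x => by rw [rpow_neg hw.le, ← div_eq_mul_inv]; ring_nf
  simp only [if_neg hk, profileWeight, hdiv]
  calc _ = h ^ 2 / 2 * (b / 2 * (f j / √(M j) - f (j + k) / √(M (j + k))) ^ 2 *
        |h * (k : ℝ)| ^ (-(1 + α))) := by ring
    _ ≤ h ^ 2 / 2 * (β k * (f j / √(M j) - f (j + k) / √(M (j + k)) * √(M j) / √(M (j + k))) ^ 2 +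
        (B * (A * cM ^ 2 * 2 ^ (1 + α)) + b) *
          ((f j / √(M j)) ^ 2 + (f (j + k) / √(M (j + k))) ^ 2) *
          kernelProfile α |h * (k : ℝ)|) := by gcongr
    _ = _ := by rw [← hform]; ring

/-- regularization estimate
`𝒮(f,f) ≥ c |f M^{-1/2}|²_{Ḣ^{α/2}_h} - C ‖f M^{-1/2}‖²_{ℓ²_h}` uniformly in `h`. -/
theorem stmt15 (α : ℝ) (hα0 : 0 < α) (hα2 : α < 2)
    (cM : ℝ) (hcM : 1 ≤ cM) (b B A : ℝ) (hb : 0 < b) (hbB : b ≤ B) (hA : 0 < A) :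
    ∃ c > 0, ∃ C > 0, ∀ h : ℝ, 0 < h → ∀ M β f : ℤ → ℝ,
      (∀ j : ℤ, 0 < M j) →
      (∀ j : ℤ, cM⁻¹ * jbr (h * j) ^ (-(1 + α)) ≤ M j ∧
        M j ≤ cM * jbr (h * j) ^ (-(1 + α))) →
      (∀ j : ℤ, (Dhp h (fun i => Real.sqrt (M i)) j) ^ 2 / M j ≤ A) →
      (∀ k : ℤ, k ≠ 0 → b * |h * (k : ℝ)| ^ (-(1 + α)) ≤ β k ∧
        β k ≤ B * |h * (k : ℝ)| ^ (-(1 + α))) →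
      Summable (fun p : ℤ × ℤ =>
        if p.2 = 0 then 0
        else β p.2 * (f p.1 / M p.1 - f (p.1 + p.2) / M (p.1 + p.2)) ^ 2 * M p.1 * h ^ 2) →
      Summable (fun p : ℤ × ℤ =>
        if p.2 = 0 then 0
        else (f p.1 / Real.sqrt (M p.1) - f (p.1 + p.2) / Real.sqrt (M (p.1 + p.2))) ^ 2 /
          |h * (p.2 : ℝ)| ^ (1 + 2 * (α / 2)) * h ^ 2) →
      Summable (fun j : ℤ => (f j / Real.sqrt (M j)) ^ 2 * h) →
      symFormDiag h β M f ≥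
        c * hSemiSq h (α / 2) (fun j => f j / Real.sqrt (M j))
          - C * l2hSq h (fun j => f j / Real.sqrt (M j)) := by
  have hB : 0 < B := hb.trans_le hbB
  have hcM0 : 0 < cM := one_pos.trans_le hcM
  set C₀ := (B * (A * cM ^ 2 * 2 ^ (1 + α)) + b) / 2
  have hC₀ : 0 < C₀ := by positivity
  have hKp : 0 < 2 / (2 - α) + 2 ^ (1 + α) / α := by
    have : 0 < 2 - α := by linarith
    positivity
  refine ⟨b / 4, by positivity, 2 * C₀ * (2 * (2 / (2 - α) + 2 ^ (1 + α) / α)), by positivity, ?_⟩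
  intro h hh M β f hMpos hM hD hβ hS hH hL
  obtain ⟨hw, hwle⟩ := summable_and_tsum_profileWeight_le hα0 hα2 hh
  have hshift := hasSum_add_shift_mul (u := fun j => (f j / √(M j)) ^ 2 * h)
    (τ := fun k => C₀ * profileWeight α h k) (fun j => by positivity)
    (fun k => mul_nonneg hC₀.le (profileWeight_nonneg α hh.le k)) hL (hw.mul_left C₀)
  have hpointwise := fun p : ℤ × ℤ =>
    hSemiSq_summand_le hh (by linarith) hcM0 hA.le hb.le hB.le hMpos hM hD hβ (f := f) p.1 p.2
  have hmain := Summable.tsum_le_tsum hpointwise (hH.mul_left (b / 4))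
    ((hS.mul_left (1 / 2)).add hshift.summable)
  rw [tsum_mul_left, (hS.mul_left _).tsum_add hshift.summable, tsum_mul_left, hshift.tsum_eq,
    tsum_mul_left] at hmain
  have hLnn : 0 ≤ ∑' j, (f j / √(M j)) ^ 2 * h := tsum_nonneg fun j => by positivity
  unfold symFormDiag hSemiSq l2hSq
  nlinarith [mul_le_mul_of_nonneg_left hwle (mul_nonneg hC₀.le hLnn)]
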